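/- Fix t' ∈ ℝ and x' ∈ ℝ^d, and define G : (t', ∞) × ℝ^d → ℂ by G(t,x) = ( m/(2πiħ(t − t')) )^{d/2} · exp( i·m·‖x − x'‖²/(2ħ(t − t')) ), where w^{d/2} denotes the principal branch of the complex power. Then G satisfies the free Schrödinger equation iħ·∂G/∂t + (ħ²/(2m))·Δ_x G = 0 at every point (t,x) with t > t'. -/

import Mathlib

open scoped RealInnerProductSpace

/-- Directional derivative of a complex-valued function on `ℝ^d` along `v`. -/
noncomputable def dirDeriv {d : ℕ} (v : EuclideanSpace ℝ (Fin d))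
    (g : EuclideanSpace ℝ (Fin d) → ℂ) (x : EuclideanSpace ℝ (Fin d)) : ℂ :=
  deriv (fun r : ℝ => g (x + r • v)) 0

/-- The Laplacian `Δg = ∑_{j=1}^d ∂²g/∂x_j²` of a complex-valued function on `ℝ^d`. -/
noncomputable def laplacian {d : ℕ} (g : EuclideanSpace ℝ (Fin d) → ℂ) :
    EuclideanSpace ℝ (Fin d) → ℂ :=
  fun x => ∑ j : Fin d,
    dirDeriv (EuclideanSpace.single j (1 : ℝ))
      (dirDeriv (EuclideanSpace.single j (1 : ℝ)) g) x

/-- `I(u,v) = (1/(mω))·∫_v^u f(s)·sin(ω(s−v)) ds ∈ ℝ^d`. -/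
noncomputable def Ivec {d : ℕ} (m ω : ℝ) (f : ℝ → EuclideanSpace ℝ (Fin d)) (u v : ℝ) :
    EuclideanSpace ℝ (Fin d) :=
  (1 / (m * ω)) • ∫ s in v..u, Real.sin (ω * (s - v)) • f s

/-- `J(u,v) = (1/(m²ω²))·∫_v^u ∫_v^s (f(s)·f(s'))·sin(ω(u−s))·sin(ω(s'−v)) ds' ds ∈ ℝ`. -/
noncomputable def Jval {d : ℕ} (m ω : ℝ) (f : ℝ → EuclideanSpace ℝ (Fin d)) (u v : ℝ) : ℝ :=
  (1 / (m ^ 2 * ω ^ 2)) * ∫ s in v..u, ∫ s' in v..s,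
    (⟪f s, f s'⟫ : ℝ) * Real.sin (ω * (u - s)) * Real.sin (ω * (s' - v))

/-! With `τ = t - t'`, `G t x = (K / τ) ^ (d / 2) * exp (ν ‖x - x'‖² / τ)` where `K = m / (2πiħ)`
and `ν = i m / (2ħ)`. Restricted to a coordinate line the Gaussian factor is the exponential of a
quadratic polynomial, which gives `Δ_x G = (2dμ + 4μ²‖x - x'‖²) G` with `μ = ν / τ`. Since `K / τ`
is purely imaginary it lies in the slit plane, where the principal power is differentiable, and
`∂_t G = -(d / (2τ) + ν‖x - x'‖² / τ²) G`. The equation then reduces to `i² = -1`. -/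

open Complex

lemma dirDeriv_dirDeriv_eq_deriv_deriv {d : ℕ} (v : EuclideanSpace ℝ (Fin d))
    (g : EuclideanSpace ℝ (Fin d) → ℂ) (x : EuclideanSpace ℝ (Fin d)) :
    dirDeriv v (dirDeriv v g) x = deriv (deriv fun r : ℝ => g (x + r • v)) 0 := by
  simp only [dirDeriv]
  congr 1
  funext r
  have hshift := deriv_comp_const_add (fun u : ℝ => g (x + u • v)) r 0
  simp only [add_zero, add_smul, ← add_assoc] at hshift
  exact hshift

lemma hasDerivAt_cexp_mul_quadratic (μ a b : ℂ) (r : ℝ) :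
    HasDerivAt (fun r : ℝ => cexp (μ * (a + b * r + r ^ 2)))
      (μ * (b + 2 * r) * cexp (μ * (a + b * r + r ^ 2))) r := by
  have hq : HasDerivAt (fun r : ℂ => μ * (a + b * r + r ^ 2)) (μ * (b + 2 * r)) r := by
    have := (((hasDerivAt_id (r : ℂ)).const_mul b).const_add a).add (hasDerivAt_pow 2 (r : ℂ))
    simpa using this.const_mul μ
  simpa [mul_comm] using hq.cexp.comp_ofReal

lemma deriv_deriv_const_mul_cexp_mul_quadratic (c μ a b : ℂ) :
    deriv (deriv fun r : ℝ => c * cexp (μ * (a + b * r + r ^ 2))) 0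
      = (2 * μ + μ ^ 2 * b ^ 2) * (c * cexp (μ * a)) := by
  have hderiv : deriv (fun r : ℝ => c * cexp (μ * (a + b * r + r ^ 2)))
      = fun r : ℝ => c * μ * ((b + 2 * r) * cexp (μ * (a + b * r + r ^ 2))) := by
    funext r
    rw [((hasDerivAt_cexp_mul_quadratic μ a b r).const_mul c).deriv]
    ring
  have hlin : HasDerivAt (fun r : ℝ => b + 2 * r) 2 0 := by
    simpa using ((hasDerivAt_id (0:ℝ)).ofReal_comp.const_mul (2:ℂ)).const_add b
  rw [hderiv, ((hlin.fun_mul (hasDerivAt_cexp_mul_quadratic μ a b 0)).const_mul (c * μ)).deriv]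
  simp only [ofReal_zero, mul_zero, add_zero, zero_pow two_ne_zero]
  ring

lemma norm_add_smul_single_sub_sq {d : ℕ} (x x₀ : EuclideanSpace ℝ (Fin d)) (j : Fin d) (r : ℝ) :
    ‖x + r • EuclideanSpace.single j (1 : ℝ) - x₀‖ ^ 2
      = ‖x - x₀‖ ^ 2 + 2 * (x - x₀) j * r + r ^ 2 := by
  rw [add_sub_right_comm, norm_add_sq_real, real_inner_smul_right,
    EuclideanSpace.inner_single_right, norm_smul, PiLp.norm_single]
  simp only [one_mul, norm_one, mul_one, Real.norm_eq_abs, sq_abs, conj_trivial]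
  ring

lemma laplacian_const_mul_cexp_mul_norm_sub_sq {d : ℕ} (c μ : ℂ)
    (x₀ x : EuclideanSpace ℝ (Fin d)) :
    laplacian (fun y => c * cexp (μ * (‖y - x₀‖ ^ 2 : ℝ))) x
      = (2 * d * μ + 4 * μ ^ 2 * (‖x - x₀‖ ^ 2 : ℝ)) * (c * cexp (μ * (‖x - x₀‖ ^ 2 : ℝ))) := by
  have hline : ∀ j : Fin d,
      dirDeriv (EuclideanSpace.single j (1 : ℝ))
        (dirDeriv (EuclideanSpace.single j (1 : ℝ)) fun y => c * cexp (μ * (‖y - x₀‖ ^ 2 : ℝ))) x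
        = (2 * μ + 4 * μ ^ 2 * ((x - x₀) j) ^ 2) * (c * cexp (μ * (‖x - x₀‖ ^ 2 : ℝ))) := by
    intro j
    simp_rw [dirDeriv_dirDeriv_eq_deriv_deriv, norm_add_smul_single_sub_sq]
    push_cast
    rw [deriv_deriv_const_mul_cexp_mul_quadratic]
    ring
  have hsum : ∑ j : Fin d, (((x - x₀) j : ℝ) : ℂ) ^ 2 = (‖x - x₀‖ ^ 2 : ℝ) := by
    rw [EuclideanSpace.norm_sq_eq]
    simp only [Real.norm_eq_abs, sq_abs, ofReal_sum, ofReal_pow]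
  simp only [laplacian, hline, ← Finset.sum_mul, Finset.sum_add_distrib, ← Finset.mul_sum, hsum,
    Finset.sum_const, Finset.card_univ, Fintype.card_fin, nsmul_eq_mul]
  ring

lemma ofReal_div_I_mem_slitPlane {r : ℝ} (hr : r ≠ 0) : (r : ℂ) / I ∈ slitPlane := by
  rw [mem_slitPlane_iff, div_I]
  simp [hr]

lemma hasDerivAt_div_sub_cpow_mul_cexp_div_sub {a C p t₀ : ℂ} {t : ℝ}
    (h : a / (t - t₀) ∈ slitPlane) :
    HasDerivAt (fun s : ℝ => (a / (s - t₀)) ^ p * cexp (C / (s - t₀)))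
      (-(p / (t - t₀) + C / (t - t₀) ^ 2) * ((a / (t - t₀)) ^ p * cexp (C / (t - t₀)))) t := by
  obtain ⟨ha, hτ⟩ := div_ne_zero_iff.mp (slitPlane_ne_zero h)
  have hdiv : ∀ b : ℂ, HasDerivAt (fun z : ℂ => b / (z - t₀)) (-b / (t - t₀) ^ 2) t := fun b => by
    simpa using (hasDerivAt_const (t : ℂ) b).fun_div ((hasDerivAt_id (t : ℂ)).sub_const t₀) hτ
  convert (((hdiv a).cpow_const h).fun_mul (hdiv C).cexp).comp_ofReal using 1
  rw [cpow_sub _ _ (slitPlane_ne_zero h), cpow_one]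
  field_simp
  ring

theorem free_propagator_schrodinger
    (hbar m : ℝ) (hhbar : 0 < hbar) (hm : 0 < m)
    (d : ℕ) (t' : ℝ) (x' : EuclideanSpace ℝ (Fin d))
    (G : ℝ → EuclideanSpace ℝ (Fin d) → ℂ)
    (hG : ∀ (t : ℝ) (x : EuclideanSpace ℝ (Fin d)),
      G t x = ((m : ℂ)
            / (2 * (Real.pi : ℂ) * Complex.I * (hbar : ℂ) * ((t : ℂ) - (t' : ℂ)))) ^ ((d : ℂ) / 2)
        * Complex.exp (Complex.I *
            ((m * ‖x - x'‖ ^ 2 / (2 * hbar * (t - t')) : ℝ) : ℂ))) :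
    ∀ (t : ℝ) (x : EuclideanSpace ℝ (Fin d)), t' < t →
      Complex.I * (hbar : ℂ) * deriv (fun s : ℝ => G s x) t
        + ((hbar : ℂ) ^ 2 / (2 * (m : ℂ))) * laplacian (G t) x = 0 := by
  intro t x ht
  have hτ : 0 < t - t' := sub_pos.mpr ht
  have hτ' : (t : ℂ) - t' ≠ 0 := by exact_mod_cast hτ.ne'
  have hhbar' : (hbar : ℂ) ≠ 0 := by exact_mod_cast hhbar.ne'
  have hm' : (m : ℂ) ≠ 0 := by exact_mod_cast hm.ne'
  set K : ℂ := m / (2 * Real.pi * I * hbar)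
  set ν : ℂ := I * m / (2 * hbar)
  have hG' : ∀ s y, G s y
      = (K / (s - t')) ^ ((d : ℂ) / 2) * cexp (ν * (‖y - x'‖ ^ 2 : ℝ) / (s - t')) := by
    intro s y
    rw [hG, div_mul_eq_div_div (m : ℂ), div_mul_eq_div_div (m * ‖y - x'‖ ^ 2)]
    congr 2
    push_cast
    ring
  have hslit : K / (t - t') ∈ slitPlane := by
    convert ofReal_div_I_mem_slitPlane (r := m / (2 * Real.pi * hbar * (t - t')))
      (by positivity) using 1
    simp only [K]
    push_cast
    field_simp
  have htime : (fun s => G s x) = _ := funext fun s => hG' s x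
  have hspace : G t = fun y =>
      (K / (t - t')) ^ ((d : ℂ) / 2) * cexp (ν / (t - t') * (‖y - x'‖ ^ 2 : ℝ)) :=
    funext fun y => by rw [hG', mul_div_right_comm]
  rw [htime, (hasDerivAt_div_sub_cpow_mul_cexp_div_sub hslit).deriv, hspace,
    laplacian_const_mul_cexp_mul_norm_sub_sq]
  simp only [ν]
  field_simp
  ring
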